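/- Let a data-independent local redaction mechanism have release set R_rel = {t : Pr(Y_t=⊥) < 1}, and let Q ⊆ R_rel with p ∉ Q. Then L(X_p→Y) ≥ I(X_p⇝X_Q). If moreover Q is a Markov quilt for X_p — i.e., there is a partition {Q, N, R} of {1,…,n} with p ∈ N such that X_R is conditionally independent of X_N given X_Q — and all nearby records are always redacted (N ∩ R_rel = ∅), then L(X_p→Y) = I(X_p⇝X_Q). -/
import Mathlib


open Finset
open scoped Classical

noncomputable section

/-- Transition matrix of the two-state Markov chain:
`transP α β i j = Pr(X_{t+1} = j | X_t = i)` with `false ↔ 0`, `true ↔ 1`. -/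
def transP (α β : ℝ) : Bool → Bool → ℝ
  | false, false => 1 - α
  | false, true  => α
  | true,  false => β
  | true,  true  => 1 - β

/-- Stationary distribution of the chain. -/
def statDist (α β : ℝ) : Bool → ℝ
  | false => β / (α + β)
  | true  => α / (α + β)

/-- Joint pmf of the stationary Markov chain `X_1, …, X_n` (0-indexed in Lean). -/
def jointX (α β : ℝ) {n : ℕ} (x : Fin n → Bool) : ℝ :=
  if h : 0 < n then
    statDist α β (x ⟨0, h⟩) *
      ∏ i : Fin (n - 1),
        transP α β (x ⟨i.1, by have := i.2; omega⟩) (x ⟨i.1 + 1, by have := i.2; omega⟩)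
  else 1

/-- Probability of an event under the chain. -/
def prX (α β : ℝ) {n : ℕ} (E : Set (Fin n → Bool)) : ℝ :=
  ∑ x : Fin n → Bool, E.indicator (jointX α β) x

/-- Conditional probability of the event `E` given the event `C`. -/
def condProb (α β : ℝ) {n : ℕ} (E C : Set (Fin n → Bool)) : ℝ :=
  prX α β (E ∩ C) / prX α β C

/-- `log (a / b)` valued in the extended reals: `⊥` when `a = 0` and
`⊤` when `a > 0 = b` (ratios of probabilities, so nonnegative inputs). -/
def logRatio (a b : ℝ) : EReal :=
  if a ≤ 0 then ⊥ else if b ≤ 0 then ⊤ else ((Real.log (a / b) : ℝ) : EReal)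

/-- Pointwise influence `i(X_p ⇝ X_S = g_S)`. -/
def pwInfl (α β : ℝ) {n : ℕ} (p : Fin n) (S : Finset (Fin n)) (g : Fin n → Bool) : EReal :=
  max
    (logRatio (condProb α β {x | ∀ t ∈ S, x t = g t} {x | x p = true})
              (condProb α β {x | ∀ t ∈ S, x t = g t} {x | x p = false}))
    (logRatio (condProb α β {x | ∀ t ∈ S, x t = g t} {x | x p = false})
              (condProb α β {x | ∀ t ∈ S, x t = g t} {x | x p = true}))

/-- Pointwise influence on a single record: `i(X_p ⇝ X_t = b)`. -/
def pwInfl1 (α β : ℝ) {n : ℕ} (p t : Fin n) (b : Bool) : EReal :=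
  pwInfl α β p {t} (fun _ => b)

/-- Max-influence `I(X_p ⇝ X_S)`. -/
def maxInfl (α β : ℝ) {n : ℕ} (p : Fin n) (S : Finset (Fin n)) : EReal :=
  ⨆ g : Fin n → Bool, pwInfl α β p S g

/-- Kernel of a local redaction mechanism with redaction probabilities
`r t x = Pr(Y_t = ⊥ | X_t = x)`: probability of the output `y` given the data `x`
(`none` encodes the erasure symbol `⊥`). -/
def mechK {n : ℕ} (r : Fin n → Bool → ℝ) (x : Fin n → Bool) (y : Fin n → Option Bool) : ℝ :=
  ∏ t, (y t).elim (r t (x t)) (fun b => if b = x t then 1 - r t (x t) else 0)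

/-- The redaction probabilities are genuine probabilities. -/
def validMech {n : ℕ} (r : Fin n → Bool → ℝ) : Prop :=
  ∀ t x, 0 ≤ r t x ∧ r t x ≤ 1

/-- Data-independent mechanism: the redaction probability does not depend on the data. -/
def dataIndep {n : ℕ} (r : Fin n → Bool → ℝ) : Prop :=
  ∀ t, r t false = r t true

/-- Joint probability `Pr(X ∈ E, Y ∈ F)`. -/
def prXY (α β : ℝ) {n : ℕ} (r : Fin n → Bool → ℝ) (E : Set (Fin n → Bool))
    (F : Set (Fin n → Option Bool)) : ℝ :=
  ∑ x : Fin n → Bool, ∑ y : Fin n → Option Bool,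
    E.indicator (jointX α β) x * F.indicator (mechK r x) y

/-- Output probability `Pr(Y ∈ F)`. -/
def prY (α β : ℝ) {n : ℕ} (r : Fin n → Bool → ℝ) (F : Set (Fin n → Option Bool)) : ℝ :=
  prXY α β r Set.univ F

/-- Conditional output probability `Pr(Y ∈ F | X_p = a)`. -/
def condY (α β : ℝ) {n : ℕ} (r : Fin n → Bool → ℝ) (p : Fin n) (a : Bool)
    (F : Set (Fin n → Option Bool)) : ℝ :=
  prXY α β r {x | x p = a} F / prX α β {x | x p = a}

/-- Privacy leakage `L(X_p → Y_T)` of the marginal output on the index set `T`: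
`log sup_{y_T ∈ supp, a} Pr(Y_T = y_T | X_p = a)/Pr(Y_T = y_T | X_p = ¬a)`. -/
def leakOn (α β : ℝ) {n : ℕ} (r : Fin n → Bool → ℝ) (p : Fin n) (T : Finset (Fin n)) : EReal :=
  ⨆ g : Fin n → Option Bool, ⨆ a : Bool,
    logRatio (condY α β r p a {y | ∀ t ∈ T, y t = g t})
             (condY α β r p (!a) {y | ∀ t ∈ T, y t = g t})

/-- Privacy leakage `L(X_p → Y)`. -/
def leak (α β : ℝ) {n : ℕ} (r : Fin n → Bool → ℝ) (p : Fin n) : EReal :=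
  leakOn α β r p univ

/-- Utility: expected fraction of correctly released records. -/
def utility (α β : ℝ) {n : ℕ} (r : Fin n → Bool → ℝ) : ℝ :=
  (1 / (n : ℝ)) * ∑ x : Fin n → Bool, ∑ y : Fin n → Option Bool,
    jointX α β x * mechK r x y * ∑ t, (if y t = some (x t) then (1 : ℝ) else 0)

/-- Large-leakage region `R_{L|ε'}`. -/
def regL (α β : ℝ) {n : ℕ} (p : Fin n) (ε' : ℝ) : Finset (Fin n) :=
  univ.filter fun t =>
    (ε' : EReal) < pwInfl1 α β p t false ∧ pwInfl1 α β p t false ≤ pwInfl1 α β p t true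

/-- Medium-leakage region `R_{M|ε'}`. -/
def regM (α β : ℝ) {n : ℕ} (p : Fin n) (ε' : ℝ) : Finset (Fin n) :=
  univ.filter fun t =>
    pwInfl1 α β p t false ≤ (ε' : EReal) ∧ (ε' : EReal) < pwInfl1 α β p t true

/-- Small-leakage region `R_{S|ε'}`. -/
def regS (α β : ℝ) {n : ℕ} (p : Fin n) (ε' : ℝ) : Finset (Fin n) :=
  univ.filter fun t =>
    pwInfl1 α β p t false ≤ pwInfl1 α β p t true ∧ pwInfl1 α β p t true ≤ (ε' : EReal)

/-- `Q^{(ℓ)}`: elements of `Q` left of `p` (inclusive). -/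
def leftOf {n : ℕ} (p : Fin n) (Q : Finset (Fin n)) : Finset (Fin n) := Q.filter (· ≤ p)

/-- `Q^{(r)}`: elements of `Q` right of `p` (inclusive). -/
def rightOf {n : ℕ} (p : Fin n) (Q : Finset (Fin n)) : Finset (Fin n) := Q.filter (p ≤ ·)

/-- The region `S = R_{S|ε_ℓ}^{(ℓ)} ∪ R_{S|ε_r}^{(r)}` of a 3R mechanism. -/
def set3S (α β : ℝ) {n : ℕ} (p : Fin n) (εl εr : ℝ) : Finset (Fin n) :=
  leftOf p (regS α β p εl) ∪ rightOf p (regS α β p εr)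

/-- The region `M = R_{M|ε_ℓ}^{(ℓ)} ∪ R_{M|ε_r}^{(r)}` of a 3R mechanism. -/
def set3M (α β : ℝ) {n : ℕ} (p : Fin n) (εl εr : ℝ) : Finset (Fin n) :=
  leftOf p (regM α β p εl) ∪ rightOf p (regM α β p εr)

/-- The region `L = R_{L|ε_ℓ}^{(ℓ)} ∪ R_{L|ε_r}^{(r)}` of a 3R mechanism. -/
def set3L (α β : ℝ) {n : ℕ} (p : Fin n) (εl εr : ℝ) : Finset (Fin n) :=
  leftOf p (regL α β p εl) ∪ rightOf p (regL α β p εr)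

/-- `r` is the 3R mechanism with regions `S`, `M`, `L` and redaction parameters `q`. -/
def is3R {n : ℕ} (r : Fin n → Bool → ℝ) (S M L : Finset (Fin n)) (q : Fin n → ℝ) : Prop :=
  ∀ t, (t ∈ L → ∀ x, r t x = 1) ∧ (t ∈ S → ∀ x, r t x = 0) ∧
    (t ∈ M → r t false = q t ∧ r t true = 1)

/-- Closed form `i_low(Δ)`. -/
def iLow (α β : ℝ) (Δ : ℕ) : ℝ :=
  |Real.log ((1 + (α / β) * (1 - α - β) ^ Δ) / (1 - (1 - α - β) ^ Δ))|

/-- Closed form `i_high(Δ)`. -/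
def iHigh (α β : ℝ) (Δ : ℕ) : ℝ :=
  |Real.log ((1 + (β / α) * (1 - α - β) ^ Δ) / (1 - (1 - α - β) ^ Δ))|

/-- The release set `R_rel`: indices that are not always redacted. -/
def releaseSet (α β : ℝ) {n : ℕ} (r : Fin n → Bool → ℝ) : Finset (Fin n) :=
  univ.filter fun t => prY α β r {y | y t = none} < 1

/-- `Q` is a Markov quilt for `X_p` with nearby records `N` and remote records `R`. -/
def IsMarkovQuilt (α β : ℝ) {n : ℕ} (p : Fin n) (Q N R : Finset (Fin n)) : Prop :=
  Disjoint Q N ∧ Disjoint Q R ∧ Disjoint N R ∧ Q ∪ N ∪ R = univ ∧ p ∈ N ∧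
  ∀ x : Fin n → Bool,
    condProb α β {v | ∀ t ∈ R, v t = x t}
        {v | (∀ t ∈ Q, v t = x t) ∧ ∀ t ∈ N, v t = x t}
      = condProb α β {v | ∀ t ∈ R, v t = x t} {v | ∀ t ∈ Q, v t = x t}

section AuxBasic
variable {α β : ℝ} {n : ℕ}

lemma transP_pos (hα : 0 < α) (hαβ : α ≤ β) (hβ : β < 1) (i j : Bool) :
    0 < transP α β i j := by
  cases i <;> cases j <;> simp only [transP] <;> linarith

lemma statDist_pos (hα : 0 < α) (hαβ : α ≤ β) (i : Bool) : 0 < statDist α β i := by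
  have hβ : 0 < β := lt_of_lt_of_le hα hαβ
  have h : 0 < α + β := by linarith
  cases i <;> simp only [statDist] <;> positivity

lemma transP_row_sum (i : Bool) : transP α β i false + transP α β i true = 1 := by
  cases i <;> simp only [transP] <;> ring

lemma jointX_succ {k : ℕ} (x : Fin (k+1) → Bool) :
    jointX α β x = statDist α β (x 0) * ∏ i : Fin k, transP α β (x i.castSucc) (x i.succ) := by
  rw [jointX, dif_pos (Nat.succ_pos k)]; rfl

lemma jointX_pos (hn : 1 ≤ n) (hα : 0 < α) (hαβ : α ≤ β) (hβ : β < 1) (x : Fin n → Bool) :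
    0 < jointX α β x := by
  obtain ⟨k, rfl⟩ : ∃ k, n = k + 1 := ⟨n - 1, by omega⟩
  rw [jointX_succ]
  exact mul_pos (statDist_pos hα hαβ _)
    (Finset.prod_pos fun i _ => transP_pos hα hαβ hβ _ _)

lemma chain_sum (α β : ℝ) :
    ∀ (k : ℕ) (g : Bool → ℝ),
    ∑ x : Fin (k+1) → Bool, g (x 0) * ∏ i : Fin k, transP α β (x i.castSucc) (x i.succ)
      = g false + g true := by
  intro k
  induction k with
  | zero =>
    intro g
    have key := Fintype.sum_equiv (Equiv.funUnique (Fin 1) Bool)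
      (fun x : Fin 1 → Bool => g (x 0) * ∏ i : Fin 0, transP α β (x i.castSucc) (x i.succ))
      (fun b : Bool => g b) (fun x => by simp [Equiv.funUnique])
    rw [key]
    simp [Fintype.sum_bool, add_comm]
  | succ k ih =>
    intro g
    have key := Fintype.sum_equiv (Fin.consEquiv (fun _ : Fin (k+1+1) => Bool))
      (fun p : Bool × (Fin (k+1) → Bool) =>
        g ((Fin.cons p.1 p.2 : Fin (k+1+1) → Bool) 0) * ∏ i : Fin (k+1),
        transP α β ((Fin.cons p.1 p.2 : Fin (k+1+1) → Bool) i.castSucc)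
          ((Fin.cons p.1 p.2 : Fin (k+1+1) → Bool) i.succ))
      (fun x : Fin (k+1+1) → Bool => g (x 0) * ∏ i : Fin (k+1),
        transP α β (x i.castSucc) (x i.succ))
      (fun p => by simp [Fin.consEquiv])
    rw [← key, Fintype.sum_prod_type]
    have step : ∀ (b : Bool) (t : Fin (k+1) → Bool),
        g ((Fin.cons b t : Fin (k+1+1) → Bool) 0) * ∏ i : Fin (k+1),
          transP α β ((Fin.cons b t : Fin (k+1+1) → Bool) i.castSucc)
            ((Fin.cons b t : Fin (k+1+1) → Bool) i.succ)
        = (g b * transP α β b (t 0)) * ∏ i : Fin k, transP α β (t i.castSucc) (t i.succ) := by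
      intro b t
      rw [Fin.prod_univ_succ]
      simp [Fin.cons_zero, Fin.cons_succ, ← Fin.succ_castSucc, mul_assoc]
    simp_rw [step]
    have inner : ∀ b : Bool,
        (∑ t : Fin (k+1) → Bool, (g b * transP α β b (t 0)) *
          ∏ i : Fin k, transP α β (t i.castSucc) (t i.succ)) = g b := by
      intro b
      have h1 : (∑ t : Fin (k+1) → Bool, (g b * transP α β b (t 0)) *
          ∏ i : Fin k, transP α β (t i.castSucc) (t i.succ))
          = g b * transP α β b false + g b * transP α β b true :=
        ih (fun c => g b * transP α β b c)
      rw [h1, ← mul_add, transP_row_sum, mul_one]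
    rw [Finset.sum_congr rfl (fun b _ => inner b)]
    simp [Fintype.sum_bool, add_comm]

lemma sum_jointX (hn : 1 ≤ n) (hα : 0 < α) (hαβ : α ≤ β) :
    ∑ x : Fin n → Bool, jointX α β x = 1 := by
  obtain ⟨k, rfl⟩ : ∃ k, n = k + 1 := ⟨n - 1, by omega⟩
  simp_rw [jointX_succ]
  rw [chain_sum α β k (statDist α β)]
  have hβ0 : 0 < β := lt_of_lt_of_le hα hαβ
  have h : α + β ≠ 0 := by positivity
  simp only [statDist]
  field_simp
  ring

end AuxBasic

section AuxProb
variable {α β : ℝ} {n : ℕ}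

/-- Canonical representatives of assignments on a finite index set `S`. -/
def canon (n : ℕ) (S : Finset (Fin n)) : Finset (Fin n → Bool) :=
  univ.filter fun v => ∀ t ∉ S, v t = false

/-- Cylinder event: `x` agrees with `v` on `S`. -/
def evC {n : ℕ} (S : Finset (Fin n)) (v : Fin n → Bool) : Set (Fin n → Bool) :=
  {x | ∀ t ∈ S, x t = v t}

lemma mem_evC {S : Finset (Fin n)} {v x : Fin n → Bool} :
    x ∈ evC S v ↔ ∀ t ∈ S, x t = v t := Iff.rfl

lemma prX_nonneg (hn : 1 ≤ n) (hα : 0 < α) (hαβ : α ≤ β) (hβ : β < 1)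
    (E : Set (Fin n → Bool)) : 0 ≤ prX α β E :=
  Finset.sum_nonneg fun x _ =>
    Set.indicator_nonneg (fun y _ => (jointX_pos hn hα hαβ hβ y).le) x

lemma prX_pos (hn : 1 ≤ n) (hα : 0 < α) (hαβ : α ≤ β) (hβ : β < 1)
    {E : Set (Fin n → Bool)} (hE : E.Nonempty) : 0 < prX α β E := by
  obtain ⟨x₀, hx₀⟩ := hE
  refine Finset.sum_pos' (fun x _ =>
    Set.indicator_nonneg (fun y _ => (jointX_pos hn hα hαβ hβ y).le) x) ⟨x₀, mem_univ _, ?_⟩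
  rw [Set.indicator_of_mem hx₀]
  exact jointX_pos hn hα hαβ hβ x₀

lemma prX_empty : prX α β (∅ : Set (Fin n → Bool)) = 0 := by
  simp [prX]

lemma prX_congr {E F : Set (Fin n → Bool)} (h : E = F) : prX α β E = prX α β F := by rw [h]

/-- Partition of an event according to the canonical assignments on `S`. -/
lemma prX_partition (S : Finset (Fin n)) (E : Set (Fin n → Bool)) :
    prX α β E = ∑ v ∈ canon n S, prX α β (E ∩ evC S v) := by
  unfold prX
  rw [Finset.sum_comm]
  refine Finset.sum_congr rfl fun x _ => ?_
  rw [Finset.sum_eq_single (fun t => if t ∈ S then x t else false)]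
  · have hx : x ∈ evC S (fun t => if t ∈ S then x t else false) := fun t ht => by simp [ht]
    by_cases hE : x ∈ E
    · rw [Set.indicator_of_mem (Set.mem_inter hE hx), Set.indicator_of_mem hE]
    · rw [Set.indicator_of_notMem (fun h => hE (Set.mem_of_mem_inter_left h)),
        Set.indicator_of_notMem hE]
  · intro v hv hne
    refine Set.indicator_of_notMem (fun hmem => hne ?_) _
    have hmem2 := Set.mem_of_mem_inter_right hmem
    have hvc : ∀ t ∉ S, v t = false := by
      intro t ht
      exact (Finset.mem_filter.mp hv).2 t ht
    funext t
    by_cases htS : t ∈ S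
    · simp [htS, ← hmem2 t htS]
    · simp [htS, hvc t htS]
  · intro h
    exfalso
    refine h (Finset.mem_filter.mpr ⟨mem_univ _, fun t ht => by simp [ht]⟩)

/-- Glue: a function agreeing with prescribed values on pairwise disjoint sets. -/
lemma glue_mem₃ {S₁ S₂ S₃ : Finset (Fin n)} (h₁₂ : Disjoint S₁ S₂) (h₁₃ : Disjoint S₁ S₃)
    (h₂₃ : Disjoint S₂ S₃) (v₁ v₂ v₃ : Fin n → Bool) :
    (fun t => if t ∈ S₁ then v₁ t else if t ∈ S₂ then v₂ t else v₃ t) ∈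
      evC S₁ v₁ ∩ evC S₂ v₂ ∩ evC S₃ v₃ := by
  refine ⟨⟨fun t ht => by simp [ht], fun t ht => ?_⟩, fun t ht => ?_⟩
  · have h1 : t ∉ S₁ := fun hc => (Finset.disjoint_left.mp h₁₂) hc ht
    simp [h1, ht]
  · have h1 : t ∉ S₁ := fun hc => (Finset.disjoint_left.mp h₁₃) hc ht
    have h2 : t ∉ S₂ := fun hc => (Finset.disjoint_left.mp h₂₃) hc ht
    simp [h1, h2]

lemma evC_singleton (p : Fin n) (a : Bool) :
    evC {p} (fun _ => a) = {x : Fin n → Bool | x p = a} := by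
  ext x; simp [evC]

/-- Mediant inequality: some term of a ratio of sums dominates the ratio. -/
lemma mediant {ι : Type*} (s : Finset ι) (a b : ι → ℝ)
    (hb0 : ∀ i ∈ s, 0 ≤ b i) (hab : ∀ i ∈ s, b i = 0 → a i = 0)
    (hs : 0 < ∑ i ∈ s, b i) :
    ∃ i ∈ s, 0 < b i ∧ (∑ j ∈ s, a j) * b i ≤ a i * (∑ j ∈ s, b j) := by
  by_contra hcon
  push_neg at hcon
  obtain ⟨i₀, hi₀s, hi₀⟩ : ∃ i ∈ s, 0 < b i := by
    by_contra hall
    push_neg at hall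
    have : ∑ i ∈ s, b i = 0 :=
      Finset.sum_eq_zero fun i hi => le_antisymm (hall i hi) (hb0 i hi)
    linarith
  have hle : ∀ i ∈ s, a i * (∑ j ∈ s, b j) ≤ (∑ j ∈ s, a j) * b i := by
    intro i hi
    rcases lt_or_eq_of_le (hb0 i hi) with hpos | hzero
    · exact (hcon i hi hpos).le
    · rw [hab i hi hzero.symm, ← hzero]
      simp
  have hstrict : ∑ i ∈ s, a i * (∑ j ∈ s, b j) < ∑ i ∈ s, (∑ j ∈ s, a j) * b i :=
    Finset.sum_lt_sum hle ⟨i₀, hi₀s, hcon i₀ hi₀s hi₀⟩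
  rw [← Finset.sum_mul, ← Finset.mul_sum] at hstrict
  exact lt_irrefl _ hstrict
end AuxProb

section AuxLogRatio

lemma logRatio_of_nonpos {a : ℝ} (ha : a ≤ 0) (b : ℝ) : logRatio a b = ⊥ := if_pos ha

lemma logRatio_top {a b : ℝ} (ha : 0 < a) (hb : b ≤ 0) : logRatio a b = ⊤ := by
  rw [logRatio, if_neg (not_le.mpr ha), if_pos hb]

lemma logRatio_le_logRatio {a b c d : ℝ} (ha : 0 < a) (hb : 0 < b) (hc : 0 < c) (hd : 0 < d)
    (h : a * d ≤ c * b) : logRatio a b ≤ logRatio c d := by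
  rw [logRatio, logRatio, if_neg (not_le.mpr ha), if_neg (not_le.mpr hb),
    if_neg (not_le.mpr hc), if_neg (not_le.mpr hd)]
  exact EReal.coe_le_coe_iff.mpr
    (Real.log_le_log (by positivity) ((div_le_div_iff₀ hb hd).mpr h))

end AuxLogRatio

section AuxMech
variable {α β : ℝ} {n : ℕ} {r : Fin n → Bool → ℝ}

/-- The weight of an output pattern (independent of the data, for data-indep mechanisms). -/
def wtK {n : ℕ} (r : Fin n → Bool → ℝ) (y : Fin n → Option Bool) : ℝ :=
  ∏ t, (y t).elim (r t true) (fun _ => 1 - r t true)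

/-- Data values compatible with the released values of `y`. -/
def matchSet {n : ℕ} (y : Fin n → Option Bool) : Set (Fin n → Bool) :=
  {x | ∀ t b, y t = some b → x t = b}

lemma r_indep (hdi : dataIndep r) (t : Fin n) (c : Bool) : r t c = r t true := by
  cases c
  · exact hdi t
  · rfl

lemma wtK_nonneg (hr : validMech r) (y : Fin n → Option Bool) : 0 ≤ wtK r y := by
  refine Finset.prod_nonneg fun t _ => ?_
  cases y t with
  | none => exact (hr t true).1
  | some b => simpa using (hr t true).2

lemma mechK_eq (hdi : dataIndep r) (x : Fin n → Bool) (y : Fin n → Option Bool) :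
    mechK r x y = if x ∈ matchSet y then wtK r y else 0 := by
  by_cases h : x ∈ matchSet y
  · rw [if_pos h]
    refine Finset.prod_congr rfl fun t _ => ?_
    cases hy : y t with
    | none =>
      show r t (x t) = r t true
      exact r_indep hdi t (x t)
    | some b =>
      have hb := h t b hy
      show (if b = x t then 1 - r t (x t) else 0) = 1 - r t true
      rw [if_pos hb.symm, r_indep hdi t (x t)]
  · rw [if_neg h]
    have : ∃ t b, y t = some b ∧ x t ≠ b := by
      by_contra hc
      push_neg at hc
      exact h fun t b hy => hc t b hy
    obtain ⟨t, b, hy, hxb⟩ := this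
    refine Finset.prod_eq_zero (mem_univ t) ?_
    rw [hy]
    exact if_neg (fun hc => hxb hc.symm)

lemma sum_mechK_none (t : Fin n) (x : Fin n → Bool) :
    ∑ y : Fin n → Option Bool, (if y t = none then mechK r x y else 0) = r t (x t) := by
  set F : Fin n → Option Bool → ℝ := fun s u =>
    if s = t then (if u = none then r s (x s) else 0)
    else u.elim (r s (x s)) (fun b => if b = x s then 1 - r s (x s) else 0) with hF
  have hpt : ∀ y : Fin n → Option Bool,
      (if y t = none then mechK r x y else 0) = ∏ s, F s (y s) := by
    intro y
    by_cases hy : y t = none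
    · rw [if_pos hy]
      refine Finset.prod_congr rfl fun s _ => ?_
      by_cases hs : s = t
      · subst hs; simp [hF, hy]
      · simp [hF, hs]
    · rw [if_neg hy]
      refine (Finset.prod_eq_zero (mem_univ t) ?_).symm
      simp [hF, hy]
  rw [Finset.sum_congr rfl fun y _ => hpt y]
  have h1 : ∑ y : Fin n → Option Bool, ∏ s, F s (y s)
      = ∑ y ∈ Fintype.piFinset (fun _ : Fin n => (univ : Finset (Option Bool))), ∏ s, F s (y s) := by
    rw [Fintype.piFinset_univ]
  rw [h1, ← Finset.prod_univ_sum]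
  rw [Finset.prod_eq_single t (fun s _ hs => ?_) (fun h => absurd (mem_univ t) h)]
  · simp [hF, Fintype.sum_option]
  · rw [Fintype.sum_option]
    simp only [hF, if_neg hs]
    have : ∑ b : Bool, (if b = x s then 1 - r s (x s) else 0) = 1 - r s (x s) := by
      rw [Fintype.sum_bool]
      cases hxs : x s <;> simp
    simp [this]

lemma prY_none (hn : 1 ≤ n) (hα : 0 < α) (hαβ : α ≤ β) (hdi : dataIndep r) (t : Fin n) :
    prY α β r {y | y t = none} = r t true := by
  unfold prY prXY
  have hpt : ∀ x : Fin n → Bool, ∑ y : Fin n → Option Bool,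
      (Set.univ.indicator (jointX α β) x) * ({y : Fin n → Option Bool | y t = none}.indicator (mechK r x) y)
      = jointX α β x * r t true := by
    intro x
    rw [Set.indicator_univ, ← Finset.mul_sum]
    have h2 : ∀ y : Fin n → Option Bool,
        ({y : Fin n → Option Bool | y t = none}.indicator (mechK r x) y)
          = (if y t = none then mechK r x y else 0) := fun y => by
      rw [Set.indicator_apply]; rfl
    rw [Finset.sum_congr rfl fun y _ => h2 y, sum_mechK_none t x, r_indep hdi t (x t)]
  rw [Finset.sum_congr rfl fun x _ => hpt x, ← Finset.sum_mul, sum_jointX hn hα hαβ, one_mul]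

lemma mem_releaseSet (hn : 1 ≤ n) (hα : 0 < α) (hαβ : α ≤ β) (hdi : dataIndep r) (t : Fin n) :
    t ∈ releaseSet α β r ↔ r t true < 1 := by
  rw [releaseSet, Finset.mem_filter, prY_none hn hα hαβ hdi t]
  simp

lemma condY_eq (hdi : dataIndep r) (p : Fin n) (a : Bool) (g : Fin n → Option Bool) :
    condY α β r p a {y | ∀ s ∈ univ, y s = g s}
      = wtK r g * prX α β (matchSet g ∩ {x | x p = a}) / prX α β {x | x p = a} := by
  unfold condY prXY
  congr 1
  have hset : {y : Fin n → Option Bool | ∀ s ∈ univ, y s = g s} = {g} := by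
    ext y
    simp [funext_iff]
  rw [hset]
  have hpt : ∀ x : Fin n → Bool, ∑ y : Fin n → Option Bool,
      ({x | x p = a} : Set (Fin n → Bool)).indicator (jointX α β) x *
        ({g} : Set (Fin n → Option Bool)).indicator (mechK r x) y
      = wtK r g * (matchSet g ∩ {x | x p = a}).indicator (jointX α β) x := by
    intro x
    rw [Finset.sum_eq_single g (fun y _ hy => by
        rw [Set.indicator_of_notMem
          (show y ∉ ({g} : Set (Fin n → Option Bool)) by simpa using hy), mul_zero])
      (fun h => absurd (mem_univ g) h)]
    rw [Set.indicator_of_mem (show g ∈ ({g} : Set (Fin n → Option Bool)) from rfl),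
      mechK_eq hdi]
    rw [Set.indicator_apply, Set.indicator_apply]
    by_cases hm : x ∈ matchSet g
    · by_cases hp : x ∈ ({x | x p = a} : Set (Fin n → Bool))
      · rw [if_pos hp, if_pos hm, if_pos (Set.mem_inter hm hp)]
        ring
      · rw [if_neg hp, if_neg (fun hc => hp (Set.mem_of_mem_inter_right hc))]
        ring
    · rw [if_neg hm, if_neg (fun hc => hm (Set.mem_of_mem_inter_left hc))]
      ring
  rw [Finset.sum_congr rfl fun x _ => hpt x, ← Finset.mul_sum]
  rfl

end AuxMech

section Part1
variable {α β : ℝ} {n : ℕ} {r : Fin n → Bool → ℝ}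

lemma condProb_pos (hn : 1 ≤ n) (hα : 0 < α) (hαβ : α ≤ β) (hβ : β < 1)
    {E C : Set (Fin n → Bool)} (hE : (E ∩ C).Nonempty) : 0 < condProb α β E C :=
  div_pos (prX_pos hn hα hαβ hβ hE)
    (prX_pos hn hα hαβ hβ (hE.mono Set.inter_subset_right))

lemma condProb_nonneg (hn : 1 ≤ n) (hα : 0 < α) (hαβ : α ≤ β) (hβ : β < 1)
    (E C : Set (Fin n → Bool)) : 0 ≤ condProb α β E C :=
  div_nonneg (prX_nonneg hn hα hαβ hβ _) (prX_nonneg hn hα hαβ hβ _)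

/-- The output pattern used in the lower-bound argument. -/
def relPat {n : ℕ} (r : Fin n → Bool → ℝ) (Q : Finset (Fin n)) (h e : Fin n → Bool) :
    Fin n → Option Bool :=
  fun t => if t ∈ Q then some (h t) else if r t true = 0 then some (e t) else none

lemma matchSet_relPat (Q : Finset (Fin n)) (h e : Fin n → Bool) :
    matchSet (relPat r Q h e)
      = evC Q h ∩ evC (univ.filter fun t => t ∉ Q ∧ r t true = 0) e := by
  ext x
  simp only [matchSet, Set.mem_setOf_eq, Set.mem_inter_iff, mem_evC,
    Finset.mem_filter, Finset.mem_univ, true_and]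
  constructor
  · intro hx
    refine ⟨fun t ht => hx t (h t) ?_, fun t ht => hx t (e t) ?_⟩
    · simp [relPat, ht]
    · simp [relPat, ht.1, ht.2]
  · rintro ⟨h1, h2⟩ t b hb
    simp only [relPat] at hb
    by_cases htQ : t ∈ Q
    · rw [if_pos htQ, Option.some_inj] at hb
      rw [h1 t htQ, hb]
    · rw [if_neg htQ] at hb
      by_cases ht0 : r t true = 0
      · rw [if_pos ht0, Option.some_inj] at hb
        rw [h2 t ⟨htQ, ht0⟩, hb]
      · rw [if_neg ht0] at hb
        exact absurd hb (by simp)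

lemma wtK_relPat_pos (hr : validMech r) {Q : Finset (Fin n)}
    (hQlt : ∀ t ∈ Q, r t true < 1) (h e : Fin n → Bool) :
    0 < wtK r (relPat r Q h e) := by
  refine Finset.prod_pos fun t _ => ?_
  by_cases htQ : t ∈ Q
  · have hp : relPat r Q h e t = some (h t) := if_pos htQ
    rw [hp]
    show 0 < 1 - r t true
    linarith [hQlt t htQ]
  · by_cases ht0 : r t true = 0
    · have hp : relPat r Q h e t = some (e t) := by
        simp only [relPat, if_neg htQ, if_pos ht0]
      rw [hp]
      show 0 < 1 - r t true
      rw [ht0]; norm_num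
    · have hp : relPat r Q h e t = none := by
        simp only [relPat, if_neg htQ, if_neg ht0]
      rw [hp]
      show 0 < r t true
      exact lt_of_le_of_ne (hr t true).1 (Ne.symm ht0)

lemma part1 (hn : 1 ≤ n) (p : Fin n) (hα : 0 < α) (hαβ : α ≤ β) (hβ : β < 1)
    (hr : validMech r) (hdi : dataIndep r)
    (Q : Finset (Fin n)) (hQrel : Q ⊆ releaseSet α β r) (hpQ : p ∉ Q) :
    maxInfl α β p Q ≤ leak α β r p := by
  have hQlt : ∀ t ∈ Q, r t true < 1 :=
    fun t ht => (mem_releaseSet hn hα hαβ hdi t).mp (hQrel ht)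
  have hZ : ∀ a : Bool, 0 < prX α β {x : Fin n → Bool | x p = a} :=
    fun a => prX_pos hn hα hαβ hβ ⟨fun _ => a, rfl⟩
  set E0 : Finset (Fin n) := univ.filter (fun t => t ∉ Q ∧ r t true = 0) with hE0
  refine iSup_le fun h => ?_
  have main : ∀ a : Bool,
      logRatio (condProb α β (evC Q h) {x | x p = a})
               (condProb α β (evC Q h) {x | x p = (!a)}) ≤ leak α β r p := by
    intro a
    by_cases hp0 : r p true = 0
    · -- leakage is infinite: p itself is released with positive probability
      refine le_trans le_top ?_
      set g := relPat r Q h (fun _ => true) with hg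
      have hmatch := matchSet_relPat (r := r) Q h (fun _ => true)
      have hgp : g p = some true := by
        simp only [hg, relPat, if_neg hpQ, if_pos hp0]
      have hMa : (matchSet g ∩ {x : Fin n → Bool | x p = true}).Nonempty := by
        refine ⟨fun t => if t ∈ Q then h t else true, ?_, ?_⟩
        · rw [hmatch]
          exact ⟨fun t ht => if_pos ht, fun t ht => by
            have := (Finset.mem_filter.mp ht).2.1
            simp [this]⟩
        · show (if p ∈ Q then h p else true) = true
          rw [if_neg hpQ]
      have hMb : matchSet g ∩ {x : Fin n → Bool | x p = false} = ∅ := by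
        ext x
        simp only [Set.mem_inter_iff, Set.mem_setOf_eq, Set.mem_empty_iff_false, iff_false,
          not_and]
        intro hx
        have := hx p true hgp
        simp [this]
      have hwt := wtK_relPat_pos hr hQlt h (fun _ => true)
      have hcondT : 0 < condY α β r p true {y | ∀ s ∈ univ, y s = g s} := by
        rw [condY_eq hdi]
        exact div_pos (mul_pos hwt (prX_pos hn hα hαβ hβ hMa)) (hZ true)
      have hcondF : condY α β r p false {y | ∀ s ∈ univ, y s = g s} = 0 := by
        rw [condY_eq hdi, prX_congr hMb, prX_empty]
        simp
      have htop : logRatio (condY α β r p true {y | ∀ s ∈ univ, y s = g s})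
          (condY α β r p (!true) {y | ∀ s ∈ univ, y s = g s}) = ⊤ := by
        refine logRatio_top hcondT ?_
        show condY α β r p false _ ≤ 0
        rw [hcondF]
      calc (⊤ : EReal) = _ := htop.symm
        _ ≤ ⨆ a' : Bool, logRatio (condY α β r p a' {y | ∀ s ∈ univ, y s = g s})
            (condY α β r p (!a') {y | ∀ s ∈ univ, y s = g s}) :=
              le_iSup (fun a' : Bool => logRatio
                (condY α β r p a' {y | ∀ s ∈ univ, y s = g s})
                (condY α β r p (!a') {y | ∀ s ∈ univ, y s = g s})) true
        _ ≤ leak α β r p := le_iSup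
            (fun g' : Fin n → Option Bool => ⨆ a' : Bool,
              logRatio (condY α β r p a' {y | ∀ s ∈ univ, y s = g' s})
                (condY α β r p (!a') {y | ∀ s ∈ univ, y s = g' s})) g
    · -- mediant argument over the always-released coordinates outside Q
      have hpE0 : p ∉ E0 := by
        simp [hE0, hp0, hpQ]
      set SA := prX α β (evC Q h ∩ {x : Fin n → Bool | x p = a}) with hSA
      set SB := prX α β (evC Q h ∩ {x : Fin n → Bool | x p = (!a)}) with hSB
      have hSApos : 0 < SA := prX_pos hn hα hαβ hβ
        ⟨fun t => if t ∈ Q then h t else a, fun t ht => if_pos ht, by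
          show (if p ∈ Q then h p else a) = a
          rw [if_neg hpQ]⟩
      have hSBpos : 0 < SB := prX_pos hn hα hαβ hβ
        ⟨fun t => if t ∈ Q then h t else (!a), fun t ht => if_pos ht, by
          show (if p ∈ Q then h p else (!a)) = (!a)
          rw [if_neg hpQ]⟩
      -- decompose over the canonical assignments on E0
      have hdecA := prX_partition (α := α) (β := β) E0 (evC Q h ∩ {x : Fin n → Bool | x p = a})
      have hdecB := prX_partition (α := α) (β := β) E0 (evC Q h ∩ {x : Fin n → Bool | x p = (!a)})
      have hBpos : ∀ e ∈ canon n E0,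
          0 < prX α β (evC Q h ∩ {x : Fin n → Bool | x p = (!a)} ∩ evC E0 e) := by
        intro e _
        refine prX_pos hn hα hαβ hβ ?_
        have hQp : Disjoint Q ({p} : Finset (Fin n)) := by
          simp [Finset.disjoint_left, hpQ]
        have hQE : Disjoint Q E0 := by
          rw [Finset.disjoint_left]
          intro t ht hte
          exact (Finset.mem_filter.mp hte).2.1 ht
        have hpE : Disjoint ({p} : Finset (Fin n)) E0 := by
          simp only [Finset.disjoint_left, Finset.mem_singleton]
          rintro t rfl
          exact fun hc => hp0 (Finset.mem_filter.mp hc).2.2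
        have := glue_mem₃ hQp hQE hpE h (fun _ => (!a)) e
        rw [evC_singleton] at this
        exact ⟨_, this⟩
      obtain ⟨e, heE, hBe, hkey⟩ := mediant (canon n E0)
        (fun e => prX α β (evC Q h ∩ {x : Fin n → Bool | x p = a} ∩ evC E0 e))
        (fun e => prX α β (evC Q h ∩ {x : Fin n → Bool | x p = (!a)} ∩ evC E0 e))
        (fun e he => (prX_nonneg hn hα hαβ hβ _))
        (fun e he h0 => absurd h0 (ne_of_gt (hBpos e he)))
        (by rw [← hdecB]; exact hSBpos)
      rw [← hdecA, ← hdecB] at hkey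
      rw [← hSA, ← hSB] at hkey
      set g := relPat r Q h e with hg
      have hmatch := matchSet_relPat (r := r) Q h e
      have hwt := wtK_relPat_pos hr hQlt h e
      set Ae := prX α β (evC Q h ∩ {x : Fin n → Bool | x p = a} ∩ evC E0 e) with hAe
      set Be := prX α β (evC Q h ∩ {x : Fin n → Bool | x p = (!a)} ∩ evC E0 e) with hBe2
      have hAepos : 0 < Ae := by
        nlinarith [hSApos, hSBpos, hBe, prX_nonneg hn hα hαβ hβ
          (evC Q h ∩ {x : Fin n → Bool | x p = a} ∩ evC E0 e)]
      have hmsetA : matchSet g ∩ {x : Fin n → Bool | x p = a}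
          = evC Q h ∩ {x : Fin n → Bool | x p = a} ∩ evC E0 e := by
        rw [hmatch]
        ext x
        simp only [Set.mem_inter_iff, Set.mem_setOf_eq]
        tauto
      have hmsetB : matchSet g ∩ {x : Fin n → Bool | x p = (!a)}
          = evC Q h ∩ {x : Fin n → Bool | x p = (!a)} ∩ evC E0 e := by
        rw [hmatch]
        ext x
        simp only [Set.mem_inter_iff, Set.mem_setOf_eq]
        tauto
      have hcondA : condY α β r p a {y | ∀ s ∈ univ, y s = g s}
          = wtK r g * Ae / prX α β {x : Fin n → Bool | x p = a} := by
        rw [condY_eq hdi, prX_congr hmsetA]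
      have hcondB : condY α β r p (!a) {y | ∀ s ∈ univ, y s = g s}
          = wtK r g * Be / prX α β {x : Fin n → Bool | x p = (!a)} := by
        rw [condY_eq hdi, prX_congr hmsetB]
      have hstep : logRatio (condProb α β (evC Q h) {x | x p = a})
            (condProb α β (evC Q h) {x | x p = (!a)})
          ≤ logRatio (condY α β r p a {y | ∀ s ∈ univ, y s = g s})
            (condY α β r p (!a) {y | ∀ s ∈ univ, y s = g s}) := by
        rw [hcondA, hcondB]
        have hZa := hZ a
        have hZb := hZ (!a)
        refine logRatio_le_logRatio (div_pos hSApos hZa) (div_pos hSBpos hZb)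
          (div_pos (mul_pos hwt hAepos) hZa) (div_pos (mul_pos hwt hBe) hZb) ?_
        show SA / prX α β {x : Fin n → Bool | x p = a} * (wtK r g * Be / prX α β {x : Fin n → Bool | x p = (!a)})
          ≤ wtK r g * Ae / prX α β {x : Fin n → Bool | x p = a} * (SB / prX α β {x : Fin n → Bool | x p = (!a)})
        rw [div_mul_div_comm, div_mul_div_comm]
        rw [div_le_div_iff₀ (by positivity) (by positivity)]
        nlinarith [mul_nonneg (mul_nonneg (sub_nonneg.mpr hkey) hwt.le) (mul_pos hZa hZb).le]
      refine le_trans hstep ?_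
      calc logRatio (condY α β r p a {y | ∀ s ∈ univ, y s = g s})
            (condY α β r p (!a) {y | ∀ s ∈ univ, y s = g s})
          ≤ ⨆ a' : Bool, logRatio (condY α β r p a' {y | ∀ s ∈ univ, y s = g s})
            (condY α β r p (!a') {y | ∀ s ∈ univ, y s = g s}) :=
              le_iSup (fun a' : Bool => logRatio
                (condY α β r p a' {y | ∀ s ∈ univ, y s = g s})
                (condY α β r p (!a') {y | ∀ s ∈ univ, y s = g s})) a
        _ ≤ leak α β r p := le_iSup
            (fun g' : Fin n → Option Bool => ⨆ a' : Bool,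
              logRatio (condY α β r p a' {y | ∀ s ∈ univ, y s = g' s})
                (condY α β r p (!a') {y | ∀ s ∈ univ, y s = g' s})) g
  exact max_le (main true) (main false)

end Part1

section Part2
variable {α β : ℝ} {n : ℕ} {r : Fin n → Bool → ℝ}

/-- Data compatible with the released values of `g` inside the index set `R`. -/
def matchOn {n : ℕ} (R : Finset (Fin n)) (g : Fin n → Option Bool) : Set (Fin n → Bool) :=
  {x | ∀ t ∈ R, ∀ b, g t = some b → x t = b}

lemma sumR (α β : ℝ) (R : Finset (Fin n)) (g : Fin n → Option Bool) (D : Set (Fin n → Bool)) :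
    prX α β (matchOn R g ∩ D)
      = ∑ ρ ∈ canon n R, (if (∀ t ∈ R, ∀ b, g t = some b → ρ t = b) then
          prX α β (evC R ρ ∩ D) else 0) := by
  rw [prX_partition R (matchOn R g ∩ D)]
  refine Finset.sum_congr rfl fun ρ hρ => ?_
  by_cases hcomp : ∀ t ∈ R, ∀ b, g t = some b → ρ t = b
  · rw [if_pos hcomp]
    refine prX_congr ?_
    ext x
    simp only [Set.mem_inter_iff, matchOn, Set.mem_setOf_eq, mem_evC]
    constructor
    · rintro ⟨⟨hm, hD⟩, hev⟩
      exact ⟨hev, hD⟩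
    · rintro ⟨hev, hD⟩
      exact ⟨⟨fun t ht b hb => by rw [hev t ht, hcomp t ht b hb], hD⟩, hev⟩
  · rw [if_neg hcomp]
    push_neg at hcomp
    obtain ⟨t, ht, b, hb, hne⟩ := hcomp
    have hempty : matchOn R g ∩ D ∩ evC R ρ = ∅ := by
      ext x
      simp only [Set.mem_inter_iff, matchOn, Set.mem_setOf_eq, mem_evC,
        Set.mem_empty_iff_false, iff_false, not_and]
      rintro ⟨hm, hD⟩ hev
      exact hne ((hev t ht).symm.trans (hm t ht b hb))
    rw [prX_congr hempty, prX_empty]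

lemma condProb_mul {E C : Set (Fin n → Bool)} (h : prX α β C ≠ 0) :
    condProb α β E C * prX α β C = prX α β (E ∩ C) := div_mul_cancel₀ _ h

lemma ci_step (hn : 1 ≤ n) (hα : 0 < α) (hαβ : α ≤ β) (hβ : β < 1)
    {Q N R : Finset (Fin n)}
    (hQN : Disjoint Q N) (hQR : Disjoint Q R) (hNR : Disjoint N R)
    (hCI : ∀ x : Fin n → Bool,
      condProb α β {v | ∀ t ∈ R, v t = x t}
          {v | (∀ t ∈ Q, v t = x t) ∧ ∀ t ∈ N, v t = x t}
        = condProb α β {v | ∀ t ∈ R, v t = x t} {v | ∀ t ∈ Q, v t = x t})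
    (g : Fin n → Option Bool) (v w : Fin n → Bool) :
    prX α β (matchOn R g ∩ (evC Q v ∩ evC N w))
      = condProb α β (matchOn R g) (evC Q v) * prX α β (evC Q v ∩ evC N w) := by
  have hQv_pos : 0 < prX α β (evC Q v) := prX_pos hn hα hαβ hβ ⟨v, fun t _ => rfl⟩
  have hQN_mem := glue_mem₃ hQN (Finset.disjoint_empty_right Q) (Finset.disjoint_empty_right N)
    v w (fun _ => false)
  have hQN_pos : 0 < prX α β (evC Q v ∩ evC N w) :=
    prX_pos hn hα hαβ hβ ⟨_, hQN_mem.1⟩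
  have hperρ : ∀ ρ : Fin n → Bool,
      prX α β (evC R ρ ∩ (evC Q v ∩ evC N w))
        = (prX α β (evC R ρ ∩ evC Q v) / prX α β (evC Q v)) * prX α β (evC Q v ∩ evC N w) := by
    intro ρ
    set x₀ : Fin n → Bool := fun t => if t ∈ Q then v t else if t ∈ N then w t else ρ t with hx₀
    have hx₀R : ∀ t ∈ R, x₀ t = ρ t := by
      intro t ht
      have h1 : t ∉ Q := Finset.disjoint_right.mp hQR ht
      have h2 : t ∉ N := Finset.disjoint_right.mp hNR ht
      simp [hx₀, h1, h2]
    have hx₀Q : ∀ t ∈ Q, x₀ t = v t := fun t ht => by simp [hx₀, ht]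
    have hx₀N : ∀ t ∈ N, x₀ t = w t := by
      intro t ht
      have h1 : t ∉ Q := Finset.disjoint_right.mp hQN ht
      simp [hx₀, h1, ht]
    have hsetR : {u : Fin n → Bool | ∀ t ∈ R, u t = x₀ t} = evC R ρ :=
      Set.ext fun u => forall₂_congr fun t ht => by rw [hx₀R t ht]
    have hsetQ : {u : Fin n → Bool | ∀ t ∈ Q, u t = x₀ t} = evC Q v :=
      Set.ext fun u => forall₂_congr fun t ht => by rw [hx₀Q t ht]
    have hsetQN : {u : Fin n → Bool | (∀ t ∈ Q, u t = x₀ t) ∧ ∀ t ∈ N, u t = x₀ t}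
        = evC Q v ∩ evC N w := by
      ext u
      simp only [Set.mem_setOf_eq, Set.mem_inter_iff, mem_evC]
      constructor
      · rintro ⟨h1, h2⟩
        exact ⟨fun t ht => (h1 t ht).trans (hx₀Q t ht),
               fun t ht => (h2 t ht).trans (hx₀N t ht)⟩
      · rintro ⟨h1, h2⟩
        exact ⟨fun t ht => (h1 t ht).trans (hx₀Q t ht).symm,
               fun t ht => (h2 t ht).trans (hx₀N t ht).symm⟩
    have hci := hCI x₀
    rw [hsetR, hsetQ, hsetQN] at hci
    have h1 : prX α β (evC R ρ ∩ (evC Q v ∩ evC N w))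
        = condProb α β (evC R ρ) (evC Q v ∩ evC N w) * prX α β (evC Q v ∩ evC N w) :=
      (condProb_mul (ne_of_gt hQN_pos)).symm
    rw [h1, hci]
    rfl
  rw [sumR α β R g (evC Q v ∩ evC N w)]
  have hterm : ∀ ρ ∈ canon n R,
      (if (∀ t ∈ R, ∀ b, g t = some b → ρ t = b) then
          prX α β (evC R ρ ∩ (evC Q v ∩ evC N w)) else 0)
        = (if (∀ t ∈ R, ∀ b, g t = some b → ρ t = b) then
            prX α β (evC R ρ ∩ evC Q v) else 0)
            * (prX α β (evC Q v ∩ evC N w) / prX α β (evC Q v)) := by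
    intro ρ _
    by_cases hcomp : ∀ t ∈ R, ∀ b, g t = some b → ρ t = b
    · rw [if_pos hcomp, if_pos hcomp, hperρ ρ]
      field_simp
    · rw [if_neg hcomp, if_neg hcomp, zero_mul]
  rw [Finset.sum_congr rfl hterm, ← Finset.sum_mul, ← sumR α β R g (evC Q v)]
  rw [condProb]
  field_simp

lemma split_pa (p : Fin n) {N : Finset (Fin n)} (hpN : p ∈ N)
    (Q : Finset (Fin n)) (v : Fin n → Bool) (a : Bool) (X : Set (Fin n → Bool)) :
    prX α β (X ∩ ({x : Fin n → Bool | x p = a} ∩ evC Q v))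
      = ∑ w ∈ canon n N, (if w p = a then prX α β (X ∩ (evC Q v ∩ evC N w)) else 0) := by
  rw [prX_partition N (X ∩ ({x : Fin n → Bool | x p = a} ∩ evC Q v))]
  refine Finset.sum_congr rfl fun w hw => ?_
  by_cases hwp : w p = a
  · rw [if_pos hwp]
    refine prX_congr ?_
    ext x
    simp only [Set.mem_inter_iff, Set.mem_setOf_eq, mem_evC]
    constructor
    · rintro ⟨⟨hX, _, hQv⟩, hNw⟩
      exact ⟨hX, hQv, hNw⟩
    · rintro ⟨hX, hQv, hNw⟩
      exact ⟨⟨hX, (hNw p hpN).trans hwp, hQv⟩, hNw⟩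
  · rw [if_neg hwp]
    have hempty : X ∩ ({x : Fin n → Bool | x p = a} ∩ evC Q v) ∩ evC N w = ∅ := by
      ext x
      simp only [Set.mem_inter_iff, Set.mem_setOf_eq, mem_evC,
        Set.mem_empty_iff_false, iff_false, not_and]
      rintro ⟨hX, hpa, hQv⟩ hNw
      exact hwp ((hNw p hpN).symm.trans hpa)
    rw [prX_congr hempty, prX_empty]

/-- Key decomposition: with nearby records redacted, the joint probability of the
match event and `X_p = a` factors through the quilt `Q`. -/
lemma decomp (hn : 1 ≤ n) (hα : 0 < α) (hαβ : α ≤ β) (hβ : β < 1) (p : Fin n)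
    {Q N R : Finset (Fin n)}
    (hQN : Disjoint Q N) (hQR : Disjoint Q R) (hNR : Disjoint N R)
    (hcover : Q ∪ N ∪ R = univ) (hpN : p ∈ N)
    (hCI : ∀ x : Fin n → Bool,
      condProb α β {v | ∀ t ∈ R, v t = x t}
          {v | (∀ t ∈ Q, v t = x t) ∧ ∀ t ∈ N, v t = x t}
        = condProb α β {v | ∀ t ∈ R, v t = x t} {v | ∀ t ∈ Q, v t = x t})
    (g : Fin n → Option Bool) (hgN : ∀ t ∈ N, g t = none) (a : Bool) :
    prX α β (matchSet g ∩ {x : Fin n → Bool | x p = a})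
      = ∑ v ∈ canon n Q,
          ((if (∀ t ∈ Q, ∀ b, g t = some b → v t = b) then 1 else 0)
              * condProb α β (matchOn R g) (evC Q v))
            * prX α β ({x : Fin n → Bool | x p = a} ∩ evC Q v) := by
  rw [prX_partition Q (matchSet g ∩ {x : Fin n → Bool | x p = a})]
  refine Finset.sum_congr rfl fun v hv => ?_
  by_cases hcomp : ∀ t ∈ Q, ∀ b, g t = some b → v t = b
  · rw [if_pos hcomp, one_mul]
    have hset : matchSet g ∩ {x : Fin n → Bool | x p = a} ∩ evC Q v
        = matchOn R g ∩ ({x : Fin n → Bool | x p = a} ∩ evC Q v) := by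
      ext x
      simp only [Set.mem_inter_iff, matchSet, matchOn, Set.mem_setOf_eq, mem_evC]
      constructor
      · rintro ⟨⟨hm, hpa⟩, hQv⟩
        exact ⟨fun t _ b hb => hm t b hb, hpa, hQv⟩
      · rintro ⟨hm, hpa, hQv⟩
        refine ⟨⟨fun t b hb => ?_, hpa⟩, hQv⟩
        have ht : t ∈ Q ∪ N ∪ R := by rw [hcover]; exact mem_univ t
        rcases Finset.mem_union.mp ht with ht' | htR
        · rcases Finset.mem_union.mp ht' with htQ | htN
          · rw [hQv t htQ, hcomp t htQ b hb]
          · rw [hgN t htN] at hb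
            exact absurd hb (by simp)
        · exact hm t htR b hb
    rw [prX_congr hset]
    -- apply the conditional-independence step through the partition over N
    rw [split_pa p hpN Q v a (matchOn R g)]
    have hterm : ∀ w ∈ canon n N,
        (if w p = a then prX α β (matchOn R g ∩ (evC Q v ∩ evC N w)) else 0)
          = condProb α β (matchOn R g) (evC Q v)
              * (if w p = a then prX α β (Set.univ ∩ (evC Q v ∩ evC N w)) else 0) := by
      intro w _
      by_cases hwp : w p = a
      · rw [if_pos hwp, if_pos hwp, ci_step hn hα hαβ hβ hQN hQR hNR hCI g v w,
          Set.univ_inter]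
      · rw [if_neg hwp, if_neg hwp, mul_zero]
    rw [Finset.sum_congr rfl hterm, ← Finset.mul_sum,
      ← split_pa p hpN Q v a Set.univ, Set.univ_inter]
  · rw [if_neg hcomp, zero_mul, zero_mul]
    push_neg at hcomp
    obtain ⟨t, ht, b, hb, hne⟩ := hcomp
    have hempty : matchSet g ∩ {x : Fin n → Bool | x p = a} ∩ evC Q v = ∅ := by
      ext x
      simp only [Set.mem_inter_iff, matchSet, Set.mem_setOf_eq, mem_evC,
        Set.mem_empty_iff_false, iff_false, not_and]
      rintro ⟨hm, _⟩ hQv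
      exact hne ((hQv t ht).symm.trans (hm t b hb))
    rw [prX_congr hempty, prX_empty]

end Part2

section Part2Main
variable {α β : ℝ} {n : ℕ} {r : Fin n → Bool → ℝ}

lemma part2 (hn : 1 ≤ n) (p : Fin n) (hα : 0 < α) (hαβ : α ≤ β) (hβ : β < 1)
    (hr : validMech r) (hdi : dataIndep r)
    (Q : Finset (Fin n)) (hpQ : p ∉ Q) (N R : Finset (Fin n))
    (hquilt : IsMarkovQuilt α β p Q N R) (hNrel : N ∩ releaseSet α β r = ∅) :
    leak α β r p ≤ maxInfl α β p Q := by
  obtain ⟨hQN, hQR, hNR, hcover, hpN, hCI⟩ := hquilt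
  have hNq : ∀ t ∈ N, r t true = 1 := by
    intro t ht
    have hnotrel : t ∉ releaseSet α β r := by
      intro hc
      rw [Finset.eq_empty_iff_forall_notMem] at hNrel
      exact hNrel t (Finset.mem_inter.mpr ⟨ht, hc⟩)
    have h2 : ¬ r t true < 1 := fun hc => hnotrel ((mem_releaseSet hn hα hαβ hdi t).mpr hc)
    exact le_antisymm (hr t true).2 (not_lt.mp h2)
  have hZ : ∀ a : Bool, 0 < prX α β {x : Fin n → Bool | x p = a} :=
    fun a => prX_pos hn hα hαβ hβ ⟨fun _ => a, rfl⟩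
  rw [leak, leakOn]
  refine iSup_le fun g => iSup_le fun a => ?_
  rw [condY_eq hdi p a g, condY_eq hdi p (!a) g]
  by_cases hpos : 0 < wtK r g * prX α β (matchSet g ∩ {x : Fin n → Bool | x p = a})
      / prX α β {x : Fin n → Bool | x p = a}
  swap
  · rw [logRatio_of_nonpos (not_lt.mp hpos)]
    exact bot_le
  · have hZa := hZ a
    have hZb := hZ (!a)
    have hW : 0 < wtK r g := by
      rcases (wtK_nonneg hr g).lt_or_eq with h | h
      · exact h
      · exfalso
        rw [← h, zero_mul, zero_div] at hpos
        exact lt_irrefl 0 hpos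
    have hMA : 0 < prX α β (matchSet g ∩ {x : Fin n → Bool | x p = a}) := by
      rcases (prX_nonneg hn hα hαβ hβ (matchSet g ∩ {x : Fin n → Bool | x p = a})).lt_or_eq
        with h | h
      · exact h
      · exfalso
        rw [← h, mul_zero, zero_div] at hpos
        exact lt_irrefl 0 hpos
    have hgN : ∀ t ∈ N, g t = none := by
      intro t ht
      cases hgt : g t with
      | none => rfl
      | some b =>
        exfalso
        have hzero : wtK r g = 0 := by
          refine Finset.prod_eq_zero (mem_univ t) ?_
          rw [hgt]
          show 1 - r t true = 0
          rw [hNq t ht]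
          ring
        exact (ne_of_gt hW) hzero
    have hdA := decomp hn hα hαβ hβ p hQN hQR hNR hcover hpN hCI g hgN a
    have hdB := decomp hn hα hαβ hβ p hQN hQR hNR hcover hpN hCI g hgN (!a)
    set d : (Fin n → Bool) → ℝ := fun v =>
      (if (∀ t ∈ Q, ∀ b, g t = some b → v t = b) then 1 else 0)
        * condProb α β (matchOn R g) (evC Q v) with hd
    have hdA' : prX α β (matchSet g ∩ {x : Fin n → Bool | x p = a})
        = ∑ v ∈ canon n Q, d v * prX α β ({x : Fin n → Bool | x p = a} ∩ evC Q v) := by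
      rw [hd]; exact hdA
    have hdB' : prX α β (matchSet g ∩ {x : Fin n → Bool | x p = (!a)})
        = ∑ v ∈ canon n Q, d v * prX α β ({x : Fin n → Bool | x p = (!a)} ∩ evC Q v) := by
      rw [hd]; exact hdB
    have hdnonneg : ∀ v, 0 ≤ d v := fun v =>
      mul_nonneg (by split <;> norm_num) (condProb_nonneg hn hα hαβ hβ _ _)
    have hPA : ∀ (b : Bool) (v : Fin n → Bool),
        0 < prX α β ({x : Fin n → Bool | x p = b} ∩ evC Q v) := by
      intro b v
      refine prX_pos hn hα hαβ hβ ⟨fun t => if t ∈ Q then v t else b, ?_, fun t ht => if_pos ht⟩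
      show (if p ∈ Q then v p else b) = b
      rw [if_neg hpQ]
    obtain ⟨v, hvQ, hbv, hkey⟩ := mediant (canon n Q)
      (fun v => d v * prX α β ({x : Fin n → Bool | x p = a} ∩ evC Q v))
      (fun v => d v * prX α β ({x : Fin n → Bool | x p = (!a)} ∩ evC Q v))
      (fun v _ => mul_nonneg (hdnonneg v) (prX_nonneg hn hα hαβ hβ _))
      (fun v _ h0 => by
        show d v * prX α β ({x : Fin n → Bool | x p = a} ∩ evC Q v) = 0
        have hdv0 : d v = 0 := by
          rcases mul_eq_zero.mp h0 with h | h
          · exact h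
          · exact absurd h (ne_of_gt (hPA (!a) v))
        rw [hdv0, zero_mul])
      (by
        rw [hdA'] at hMA
        obtain ⟨v₀, hv₀, hne₀⟩ := Finset.exists_ne_zero_of_sum_ne_zero (ne_of_gt hMA)
        have hd₀ : 0 < d v₀ := by
          rcases (hdnonneg v₀).lt_or_eq with h | h
          · exact h
          · exact absurd (by rw [← h, zero_mul] : d v₀ *
              prX α β ({x : Fin n → Bool | x p = a} ∩ evC Q v₀) = 0) hne₀
        exact Finset.sum_pos' (fun u _ => mul_nonneg (hdnonneg u)
          (prX_nonneg hn hα hαβ hβ _)) ⟨v₀, hv₀, mul_pos hd₀ (hPA (!a) v₀)⟩)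
    rw [← hdA', ← hdB'] at hkey
    have hdv : 0 < d v := by
      rcases (hdnonneg v).lt_or_eq with h | h
      · exact h
      · exfalso
        rw [← h, zero_mul] at hbv
        exact lt_irrefl 0 hbv
    have hMB : 0 < prX α β (matchSet g ∩ {x : Fin n → Bool | x p = (!a)}) := by
      rw [hdB']
      exact Finset.sum_pos' (fun u _ => mul_nonneg (hdnonneg u)
        (prX_nonneg hn hα hαβ hβ _)) ⟨v, hvQ, hbv⟩
    have hMAPB : prX α β (matchSet g ∩ {x : Fin n → Bool | x p = a})
          * prX α β ({x : Fin n → Bool | x p = (!a)} ∩ evC Q v)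
        ≤ prX α β ({x : Fin n → Bool | x p = a} ∩ evC Q v)
          * prX α β (matchSet g ∩ {x : Fin n → Bool | x p = (!a)}) := by
      have h1 : d v * (prX α β (matchSet g ∩ {x : Fin n → Bool | x p = a})
            * prX α β ({x : Fin n → Bool | x p = (!a)} ∩ evC Q v))
          ≤ d v * (prX α β ({x : Fin n → Bool | x p = a} ∩ evC Q v)
            * prX α β (matchSet g ∩ {x : Fin n → Bool | x p = (!a)})) := by
        nlinarith [hkey]
      exact le_of_mul_le_mul_left h1 hdv
    have hcondA : condProb α β (evC Q v) {x : Fin n → Bool | x p = a}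
        = prX α β ({x : Fin n → Bool | x p = a} ∩ evC Q v)
            / prX α β {x : Fin n → Bool | x p = a} := by
      rw [condProb, Set.inter_comm]
    have hcondB : condProb α β (evC Q v) {x : Fin n → Bool | x p = (!a)}
        = prX α β ({x : Fin n → Bool | x p = (!a)} ∩ evC Q v)
            / prX α β {x : Fin n → Bool | x p = (!a)} := by
      rw [condProb, Set.inter_comm]
    have hstep : logRatio
          (wtK r g * prX α β (matchSet g ∩ {x : Fin n → Bool | x p = a})
            / prX α β {x : Fin n → Bool | x p = a})
          (wtK r g * prX α β (matchSet g ∩ {x : Fin n → Bool | x p = (!a)})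
            / prX α β {x : Fin n → Bool | x p = (!a)})
        ≤ logRatio (condProb α β (evC Q v) {x : Fin n → Bool | x p = a})
          (condProb α β (evC Q v) {x : Fin n → Bool | x p = (!a)}) := by
      rw [hcondA, hcondB]
      refine logRatio_le_logRatio (div_pos (mul_pos hW hMA) hZa)
        (div_pos (mul_pos hW hMB) hZb) (div_pos (hPA a v) hZa) (div_pos (hPA (!a) v) hZb) ?_
      rw [div_mul_div_comm, div_mul_div_comm]
      rw [div_le_div_iff₀ (by positivity) (by positivity)]
      nlinarith [mul_nonneg (mul_nonneg (sub_nonneg.mpr hMAPB) hW.le) (mul_pos hZa hZb).le]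
    refine le_trans hstep (le_trans ?_ (le_iSup (fun u : Fin n → Bool => pwInfl α β p Q u) v))
    cases a with
    | true => exact le_max_left _ _
    | false => exact le_max_right _ _

end Part2Main

/-- For a data-independent local redaction mechanism and any
`Q ⊆ R_rel` with `p ∉ Q`, the leakage is at least the max-influence `I(X_p ⇝ X_Q)`;
if moreover `Q` is a Markov quilt for `X_p` whose nearby records are always redacted,
equality holds. -/
theorem statement5 {n : ℕ} (hn : 1 ≤ n) (p : Fin n) (α β : ℝ)
    (hα : 0 < α) (hαβ : α ≤ β) (hβ : β < 1)
    (r : Fin n → Bool → ℝ) (hr : validMech r) (hdi : dataIndep r)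
    (Q : Finset (Fin n)) (hQrel : Q ⊆ releaseSet α β r) (hpQ : p ∉ Q) :
    maxInfl α β p Q ≤ leak α β r p ∧
    (∀ N R : Finset (Fin n), IsMarkovQuilt α β p Q N R →
      N ∩ releaseSet α β r = ∅ → leak α β r p = maxInfl α β p Q) := by
  refine ⟨part1 hn p hα hαβ hβ hr hdi Q hQrel hpQ, ?_⟩
  intro N R hq hN
  exact le_antisymm (part2 hn p hα hαβ hβ hr hdi Q hpQ N R hq hN)
    (part1 hn p hα hαβ hβ hr hdi Q hQrel hpQ)
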